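/- For integers n ≥ r ≥ 1, [p_n^{(r)}]_q = ∑_{j=r}^n p_n^{(j)} · ( ∑_{l=r}^j (−1)^{l−r} C(j,l) [l choose r]_q ), where C(j,l) is the ordinary binomial coefficient and [l choose r]_q is the q-binomial coefficient. -/

import Mathlib

open MvPolynomial PowerSeries

noncomputable section

/-- The field `ℚ(q)` of rational functions in the indeterminate `q`. -/
abbrev K : Type := RatFunc ℚ

/-- The indeterminate `q` in `ℚ(q)`. -/
def qq : K := RatFunc.X

/-- `[n]_x = 1 + x + ⋯ + x^{n-1}` (so `[0]_x = 0`). -/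
def qNat (x : K) (n : ℕ) : K := ∑ i ∈ Finset.range n, x ^ i

/-- `[n]_x! = [1]_x [2]_x ⋯ [n]_x` (so `[0]_x! = 1`). -/
def qFact (x : K) (n : ℕ) : K := ∏ i ∈ Finset.range n, qNat x (i + 1)

/-- The `q`-binomial coefficient `[n choose k]_x`, equal to
`[n]_x!/([k]_x! [n-k]_x!)` for `n ≥ k ≥ 0` and to `0` otherwise. -/
def qBinom (x : K) (n k : ℕ) : K :=
  if k ≤ n then qFact x n / (qFact x k * qFact x (n - k)) else 0

/-- `p_n^{(r)}`: the sum of the monomial symmetric polynomials `m_λ` over the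
partitions `λ` of `n` of length `r` (in `N` variables, over `ℚ(q)`).
For `r = 0` this automatically gives `δ_{n,0}`. -/
def pnr (N n r : ℕ) : MvPolynomial (Fin N) K :=
  ∑ μ ∈ Finset.univ.filter (fun μ : Nat.Partition n => μ.parts.card = r),
    msymm (Fin N) K μ

/-- `E(t) = ∑_{m ≥ 0} e_m t^m`. -/
def Eser (N : ℕ) : PowerSeries (MvPolynomial (Fin N) K) :=
  PowerSeries.mk fun m => esymm (Fin N) K m

/-- The property of being "the" `q`-derivative operator on power series over
`MvPolynomial (Fin N) ℚ(q)`: `Dq` satisfies `((q−1)·t) · Dq F = F(qt) − F(t)`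
for every `F`.  (This characterizes `Dq F = (F(qt) − F(t))/((q−1)t)` uniquely,
since `(q−1)·t` is a nonzerodivisor.) -/
def IsqDeriv (N : ℕ)
    (Dq : PowerSeries (MvPolynomial (Fin N) K) → PowerSeries (MvPolynomial (Fin N) K)) : Prop :=
  ∀ F, (PowerSeries.C (MvPolynomial.C (qq - 1)) * PowerSeries.X) * Dq F =
    PowerSeries.rescale (MvPolynomial.C qq) F - F

/-- The property that the family `P n r` is the family of `q`-analogs
`[p_n^{(r)}]_q`, i.e. it satisfies the defining generating identity
`[r]_q! · E(t) · ∑_{n≥r} [p_n^{(r)}]_q (−1)^{n−r} t^{n−r} = D_q^r E(t)` for every `r ≥ 0`,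
where `Dq` is the `q`-derivative. -/
def IsqAnalog (N : ℕ)
    (Dq : PowerSeries (MvPolynomial (Fin N) K) → PowerSeries (MvPolynomial (Fin N) K))
    (P : ℕ → ℕ → MvPolynomial (Fin N) K) : Prop :=
  ∀ r : ℕ,
    PowerSeries.C (MvPolynomial.C (qFact qq r)) * Eser N *
        (PowerSeries.mk fun m => (-1 : MvPolynomial (Fin N) K) ^ m * P (m + r) r) =
      Dq^[r] (Eser N)

end

/-!
Since `E(t)` has constant term `1`, the defining identity determines `∑_m (-1)^m P_{m+r,r} t^m`,
so it suffices that the claimed expansion `Q_n` satisfies it too. As the `t^m`-coefficient of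
`D_q^r E(t)` is `([m+r]_q! / [m]_q!) e_{m+r}`, this means
`∑_{a+b=m} (-1)^b e_a Q_{b+r} = [m+r choose r]_q e_{m+r}`. Monomial by monomial, a sign-reversing
involution (toggle a variable whose exponent is at least `2`) gives
`∑_{a+n=M} (-1)^n e_a p_n^{(j)} = (-1)^j C(M,j) e_M`, which reduces this to Newton's
forward-difference formula `∑_j C(M,j) Δ^j f(0) = f(M)` for `f l = [l choose r]_q`: the inner sum
of the statement is `(-1)^(j+r) Δ^j f(0)`.
-/

open Finset

lemma qNat_ne_zero {n : ℕ} (hn : n ≠ 0) : qNat qq n ≠ 0 := by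
  have hpoly : (∑ i ∈ range n, Polynomial.X ^ i : Polynomial ℚ) ≠ 0 := fun h => by
    simpa [hn] using congrArg (Polynomial.eval 1) h
  simpa [qNat, qq, RatFunc.algebraMap_X] using RatFunc.algebraMap_ne_zero hpoly

lemma qFact_ne_zero (n : ℕ) : qFact qq n ≠ 0 :=
  prod_ne_zero_iff.2 fun _ _ => qNat_ne_zero (Nat.succ_ne_zero _)

lemma qFact_succ (x : K) (n : ℕ) : qFact x (n + 1) = qFact x n * qNat x (n + 1) :=
  prod_range_succ _ _

lemma qq_sub_one_ne_zero : qq - 1 ≠ 0 := by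
  simpa [qq, RatFunc.algebraMap_X] using
    RatFunc.algebraMap_ne_zero (Polynomial.X_sub_C_ne_zero (1 : ℚ))

lemma qFact_mul_qBinom (m r : ℕ) :
    qFact qq r * qBinom qq (m + r) r = qFact qq (m + r) / qFact qq m := by
  rw [qBinom, if_pos (Nat.le_add_left r m), Nat.add_sub_cancel]
  field_simp [qFact_ne_zero]

lemma sub_one_mul_qNat (x : K) (n : ℕ) : (x - 1) * qNat x n = x ^ n - 1 := by
  rw [mul_comm, qNat, geom_sum_mul]

namespace IsqDeriv

variable {N : ℕ} {Dq : PowerSeries (MvPolynomial (Fin N) K) → PowerSeries (MvPolynomial (Fin N) K)}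

lemma coeff_apply (hDq : IsqDeriv N Dq) (F : PowerSeries (MvPolynomial (Fin N) K)) (n : ℕ) :
    PowerSeries.coeff n (Dq F) =
      MvPolynomial.C (qNat qq (n + 1)) * PowerSeries.coeff (n + 1) F := by
  have h := congrArg (PowerSeries.coeff (n + 1)) (hDq F)
  rw [mul_assoc, PowerSeries.coeff_C_mul, coeff_succ_X_mul, map_sub (PowerSeries.coeff (n + 1)),
    coeff_rescale] at h
  refine mul_left_cancel₀ (MvPolynomial.C_ne_zero.2 qq_sub_one_ne_zero) ?_
  rw [h, ← mul_assoc, ← map_mul, sub_one_mul_qNat, map_sub, map_pow, map_one, sub_one_mul]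

lemma coeff_iterate (hDq : IsqDeriv N Dq) (F : PowerSeries (MvPolynomial (Fin N) K))
    (r m : ℕ) :
    PowerSeries.coeff m (Dq^[r] F) =
      MvPolynomial.C (qFact qq (m + r) / qFact qq m) * PowerSeries.coeff (m + r) F := by
  induction r generalizing m with
  | zero => simp [qFact_ne_zero]
  | succ r ih =>
    rw [Function.iterate_succ_apply', hDq.coeff_apply, ih, ← mul_assoc, ← map_mul,
      qFact_succ, Nat.add_right_comm, ← Nat.add_assoc]
    congr 2
    field_simp [qFact_ne_zero, qNat_ne_zero (Nat.succ_ne_zero m)]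

end IsqDeriv

noncomputable def signedQBinomSum (r j : ℕ) : K :=
  ∑ l ∈ Icc r j, (-1 : K) ^ (l - r) * (j.choose l : K) * qBinom qq l r

lemma fwdDiff_iter_qBinom (r j : ℕ) :
    (fwdDiff 1)^[j] (fun l => qBinom qq l r) 0 = (-1) ^ (j + r) * signedQBinomSum r j := by
  rw [fwdDiff_iter_eq_sum_shift, signedQBinomSum, mul_sum]
  symm
  refine (sum_congr rfl fun l hl => ?_).trans
    (sum_subset (fun l hl => mem_range.2 (by grind)) fun l hl hl' => ?_)
  · obtain ⟨hrl, hlj⟩ := mem_Icc.1 hl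
    have hsign : (-1 : K) ^ (j + r) * (-1) ^ (l - r) = (-1) ^ (j - l) := by
      rw [← pow_add, neg_one_pow_eq_pow_mod_two, neg_one_pow_eq_pow_mod_two (n := j - l)]
      congr 1
      omega
    simp only [zsmul_eq_mul, Int.cast_mul, Int.cast_pow, Int.cast_neg, Int.cast_one,
      Int.cast_natCast, zero_add, nsmul_one, Nat.cast_id, ← hsign]
    ring
  · have hlr : l < r := by grind
    simp [qBinom, Nat.not_le.2 hlr]

lemma sum_choose_mul_signedQBinomSum (r M : ℕ) :
    ∑ j ∈ Icc r M, (M.choose j : K) * ((-1) ^ (j + r) * signedQBinomSum r j) = qBinom qq M r := by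
  have newton := shift_eq_sum_fwdDiff_iter 1 (fun l => qBinom qq l r) M 0
  simp only [zero_add, smul_eq_mul, mul_one, fwdDiff_iter_qBinom, nsmul_eq_mul] at newton
  rw [newton]
  refine sum_subset (fun j hj => mem_range.2 (by grind)) fun j hj hj' => ?_
  rw [signedQBinomSum, Icc_eq_empty (by grind), sum_empty, mul_zero, mul_zero]

section Combinatorics

variable {σ : Type*}

lemma sum_single_one_apply [DecidableEq σ] (S : Finset σ) (i : σ) :
    (∑ k ∈ S, Finsupp.single k 1) i = if i ∈ S then 1 else 0 := by
  simp [Finsupp.finsetSum_apply, Finsupp.single_apply]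

lemma support_sum_single_one (S : Finset σ) : (∑ i ∈ S, Finsupp.single i 1).support = S := by
  classical
  ext i
  simp [sum_single_one_apply]

lemma sum_single_one_le_iff {S : Finset σ} {d : σ →₀ ℕ} :
    ∑ i ∈ S, Finsupp.single i 1 ≤ d ↔ S ⊆ d.support := by
  classical
  rw [Finsupp.le_iff, support_sum_single_one]
  refine forall₂_congr fun i hi => ?_
  simp [sum_single_one_apply, hi, Nat.one_le_iff_ne_zero]

lemma sum_single_one_tsub [DecidableEq σ] (T S : Finset σ) :
    ∑ i ∈ T, Finsupp.single i 1 - ∑ i ∈ S, Finsupp.single i 1 =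
      ∑ i ∈ T \ S, Finsupp.single i 1 := by
  ext i
  simp only [Finsupp.tsub_apply, sum_single_one_apply, mem_sdiff]
  by_cases hT : i ∈ T <;> by_cases hS : i ∈ S <;> simp [hT, hS]

lemma degree_sum_single_one (S : Finset σ) : (∑ i ∈ S, Finsupp.single i 1).degree = #S := by
  simp [map_sum]

lemma degree_tsub_sum_single_one_add {S : Finset σ} {d : σ →₀ ℕ} (h : S ⊆ d.support) :
    (d - ∑ i ∈ S, Finsupp.single i 1).degree + #S = d.degree := by
  rw [← degree_sum_single_one, ← map_add, tsub_add_cancel_of_le (sum_single_one_le_iff.2 h)]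

lemma card_support_le_degree (d : σ →₀ ℕ) : #d.support ≤ d.degree := by
  rw [Finsupp.degree_apply]
  simpa using d.support.card_nsmul_le_sum d 1 fun i hi =>
    Nat.one_le_iff_ne_zero.2 (Finsupp.mem_support_iff.1 hi)

noncomputable def signedSupportIndicator (R : Type*) [Ring R] (j : ℕ) (e : σ →₀ ℕ) : R :=
  if #e.support = j then (-1) ^ e.degree else 0

lemma sum_powerset_signedSupportIndicator_tsub_eq_zero {R : Type*} [CommRing R] [DecidableEq σ]
    {d : σ →₀ ℕ} {i₀ : σ} (hi₀ : 2 ≤ d i₀) (j : ℕ) :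
    ∑ S ∈ d.support.powerset,
      signedSupportIndicator R j (d - ∑ i ∈ S, Finsupp.single i 1) = 0 := by
  have hmem : i₀ ∈ d.support := Finsupp.mem_support_iff.2 (by omega)
  rw [← insert_erase hmem, sum_powerset_insert (notMem_erase _ _), ← sum_add_distrib]
  refine sum_eq_zero fun S hS => ?_
  have hi₀S : i₀ ∉ S := fun h => notMem_erase i₀ d.support (mem_powerset.1 hS h)
  replace hS : S ⊆ d.support := (mem_powerset.1 hS).trans (erase_subset _ _)
  -- As `2 ≤ d i₀`, also removing `i₀` keeps it in the support: paired terms differ only in the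
  -- parity of the degree.
  have hsupp : (d - ∑ i ∈ insert i₀ S, Finsupp.single i 1).support =
      (d - ∑ i ∈ S, Finsupp.single i 1).support := by
    ext i
    simp only [Finsupp.mem_support_iff, Finsupp.tsub_apply, sum_single_one_apply, mem_insert]
    by_cases h : i = i₀
    · simp [h, hi₀S]
      omega
    · simp [h]
  have hdeg : (d - ∑ i ∈ insert i₀ S, Finsupp.single i 1).degree + 1 =
      (d - ∑ i ∈ S, Finsupp.single i 1).degree := by
    have h₁ := degree_tsub_sum_single_one_add (insert_subset hmem hS)
    have h₂ := degree_tsub_sum_single_one_add hS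
    rw [card_insert_of_notMem hi₀S] at h₁
    omega
  rw [signedSupportIndicator, signedSupportIndicator, hsupp, ← hdeg]
  split_ifs <;> ring

lemma sum_powerset_signedSupportIndicator_sum_single_one_tsub {R : Type*} [CommRing R]
    [DecidableEq σ] (T : Finset σ) (j : ℕ) :
    ∑ S ∈ T.powerset, signedSupportIndicator R j
      (∑ i ∈ T, Finsupp.single i 1 - ∑ i ∈ S, Finsupp.single i 1) = (-1) ^ j * (#T).choose j := by
  simp only [signedSupportIndicator, sum_single_one_tsub, support_sum_single_one,
    degree_sum_single_one]
  calc ∑ S ∈ T.powerset, (if #(T \ S) = j then (-1 : R) ^ #(T \ S) else 0)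
      = ∑ S ∈ T.powerset, (if #S = j then (-1 : R) ^ #S else 0) :=
        sum_nbij' (T \ ·) (T \ ·) (by simp) (by simp)
          (fun S hS => Finset.sdiff_sdiff_eq_self (mem_powerset.1 hS))
          (fun S hS => Finset.sdiff_sdiff_eq_self (mem_powerset.1 hS)) fun _ _ => rfl
    _ = ∑ S ∈ powersetCard j T, (-1 : R) ^ j := by
        rw [← sum_filter, ← powersetCard_eq_filter]
        exact sum_congr rfl fun S hS => by rw [(mem_powersetCard.1 hS).2]
    _ = (-1) ^ j * (#T).choose j := by
        rw [sum_const, card_powersetCard, nsmul_eq_mul, mul_comm]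

variable {R : Type*} [CommSemiring R] [Fintype σ]

lemma coeff_esymm_mul (a : ℕ) (f : MvPolynomial σ R) (d : σ →₀ ℕ) :
    coeff d (esymm σ R a * f) =
      ∑ S ∈ powersetCard a d.support, coeff (d - ∑ i ∈ S, Finsupp.single i 1) f := by
  classical
  rw [esymm_eq_sum_monomial, sum_mul, coeff_sum]
  simp_rw [coeff_monomial_mul', one_mul]
  rw [← sum_filter]
  congr 1
  ext S
  simp only [mem_filter, mem_powersetCard, sum_single_one_le_iff, subset_univ, true_and]
  tauto

lemma coeff_esymm_eq_zero_of_degree_ne {d : σ →₀ ℕ} {a : ℕ} (hd : d.degree ≠ a) :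
    coeff d (esymm σ R a) = 0 := by
  classical
  rw [← mul_one (esymm σ R a), coeff_esymm_mul]
  refine sum_eq_zero fun S hS => ?_
  obtain ⟨hST, rfl⟩ := mem_powersetCard.1 hS
  rw [MvPolynomial.coeff_one, if_neg]
  intro h
  have := degree_tsub_sum_single_one_add hST
  rw [← h, map_zero] at this
  omega

lemma coeff_esymm_eq_zero_of_two_le {d : σ →₀ ℕ} {i₀ : σ} (hi₀ : 2 ≤ d i₀) (a : ℕ) :
    coeff d (esymm σ R a) = 0 := by
  classical
  rw [← mul_one (esymm σ R a), coeff_esymm_mul]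
  refine sum_eq_zero fun S _ => ?_
  rw [MvPolynomial.coeff_one, if_neg]
  intro h
  have := congrArg (· i₀) h
  simp only [Finsupp.coe_zero, Pi.zero_apply, Finsupp.tsub_apply, sum_single_one_apply] at this
  split_ifs at this <;> omega

lemma coeff_sum_single_one_esymm_card (T : Finset σ) :
    coeff (∑ i ∈ T, Finsupp.single i 1) (esymm σ R #T) = 1 := by
  rw [← mul_one (esymm σ R #T), coeff_esymm_mul, support_sum_single_one, powersetCard_self,
    sum_singleton, tsub_self, MvPolynomial.coeff_zero_one]

lemma coeff_sum_antidiagonal_esymm_mul (f : ℕ → MvPolynomial σ R) (φ : (σ →₀ ℕ) → R)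
    (hf : ∀ n d, coeff d (f n) = if d.degree = n then φ d else 0) (M : ℕ) (d : σ →₀ ℕ) :
    coeff d (∑ p ∈ antidiagonal M, esymm σ R p.1 * f p.2) =
      if d.degree = M then ∑ S ∈ d.support.powerset, φ (d - ∑ i ∈ S, Finsupp.single i 1)
      else 0 := by
  have hdeg : ∀ a ≤ M, ∀ S ∈ powersetCard a d.support,
      ((d - ∑ i ∈ S, Finsupp.single i 1).degree = M - a ↔ d.degree = M) := by
    intro a ha S hS
    obtain ⟨hST, rfl⟩ := mem_powersetCard.1 hS
    have := degree_tsub_sum_single_one_add hST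
    omega
  simp_rw [coeff_sum, coeff_esymm_mul, hf]
  rw [Nat.sum_antidiagonal_eq_sum_range_succ_mk]
  split_ifs with hd
  · rw [sum_powerset]
    refine (sum_congr rfl fun k hk => sum_congr rfl fun S hS =>
      if_pos ((hdeg k (by grind) S hS).2 hd)).trans ?_
    refine (sum_subset (range_subset_range.2 ?_) fun k _ hk => ?_).symm
    · have := card_support_le_degree d
      omega
    · rw [powersetCard_eq_empty.2 (by grind), sum_empty]
  · exact sum_eq_zero fun k hk => sum_eq_zero fun S hS =>
      if_neg (mt (hdeg k (by grind) S hS).1 hd)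

end Combinatorics

lemma sum_powerset_signedSupportIndicator_tsub {σ R : Type*} [Fintype σ] [DecidableEq σ]
    [CommRing R] (d : σ →₀ ℕ) (j : ℕ) :
    ∑ S ∈ d.support.powerset, signedSupportIndicator R j (d - ∑ i ∈ S, Finsupp.single i 1) =
      (-1) ^ j * d.degree.choose j * coeff d (esymm σ R d.degree) := by
  by_cases h : ∃ i₀, 2 ≤ d i₀
  · obtain ⟨i₀, hi₀⟩ := h
    rw [sum_powerset_signedSupportIndicator_tsub_eq_zero hi₀, coeff_esymm_eq_zero_of_two_le hi₀,
      mul_zero]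
  · obtain ⟨T, rfl⟩ : ∃ T : Finset σ, d = ∑ i ∈ T, Finsupp.single i 1 := by
      refine ⟨d.support, Finsupp.ext fun i => ?_⟩
      have := not_le.1 (not_exists.1 h i)
      rw [sum_single_one_apply]
      split_ifs with hi
      · have := Finsupp.mem_support_iff.1 hi
        omega
      · exact Finsupp.notMem_support_iff.1 hi
    rw [support_sum_single_one, degree_sum_single_one,
      sum_powerset_signedSupportIndicator_sum_single_one_tsub,
      coeff_sum_single_one_esymm_card, mul_one]

lemma prod_map_X_eq_monomial {σ R : Type*} [CommSemiring R] [DecidableEq σ] (s : Multiset σ) :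
    (s.map MvPolynomial.X).prod = monomial (Multiset.toFinsupp s) (1 : R) := by
  induction s using Multiset.induction_on with
  | empty => simp
  | cons a s ih =>
    rw [Multiset.map_cons, Multiset.prod_cons, ih, ← Multiset.singleton_add,
      Multiset.toFinsupp_add, Multiset.toFinsupp_singleton, MvPolynomial.X, monomial_mul, one_mul]

lemma pnr_eq_sum_sym (N n j : ℕ) :
    pnr N n j = ∑ s : Sym (Fin N) n with (Nat.Partition.ofSym s).parts.card = j,
      monomial (Multiset.toFinsupp (s : Multiset (Fin N))) 1 := by
  rw [pnr, ← sum_fiberwise_of_maps_to (g := fun s : Sym (Fin N) n => Nat.Partition.ofSym s)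
    (t := univ.filter fun μ : n.Partition => μ.parts.card = j) (by simp)]
  refine sum_congr rfl fun μ hμ => ?_
  rw [msymm, ← sum_subtype (univ.filter (Nat.Partition.ofSym · = μ)) (by simp)
    (fun s : Sym (Fin N) n => (s.1.map MvPolynomial.X).prod), filter_filter]
  exact sum_congr (filter_congr fun s _ => ⟨fun h => ⟨h ▸ (mem_filter.1 hμ).2, h⟩, And.right⟩)
    fun s _ => prod_map_X_eq_monomial _

lemma coeff_pnr (N n j : ℕ) (d : Fin N →₀ ℕ) :
    coeff d (pnr N n j) = if d.degree = n ∧ #d.support = j then 1 else 0 := by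
  rw [pnr_eq_sum_sym, coeff_sum]
  simp_rw [MvPolynomial.coeff_monomial]
  by_cases hd : d.degree = n
  · let s₀ : Sym (Fin N) n := ⟨Finsupp.toMultiset d, (Finsupp.card_toMultiset d).trans hd⟩
    have hs₀ : ∀ s : Sym (Fin N) n, Multiset.toFinsupp (s : Multiset (Fin N)) = d ↔ s = s₀ :=
      fun s => Multiset.toFinsupp_eq_iff.trans (Sym.coe_inj (s₂ := s₀))
    simp_rw [hs₀, sum_ite_eq', mem_filter, mem_univ, true_and, hd, true_and]
    simp only [s₀, Nat.Partition.ofSym, Multiset.card_map]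
    rw [← Multiset.card_toFinset, Finsupp.toFinset_toMultiset]
  · rw [if_neg (hd ·.1)]
    refine sum_eq_zero fun s _ => if_neg fun h => hd ?_
    have := Finsupp.card_toMultiset (Multiset.toFinsupp (s : Multiset (Fin N)))
    rw [Multiset.toFinsupp_toMultiset, Sym.card_coe, h] at this
    exact this.symm

lemma pnr_eq_zero_of_lt {N n j : ℕ} (h : n < j) : pnr N n j = 0 := by
  ext d
  rw [coeff_pnr, MvPolynomial.coeff_zero, if_neg]
  rintro ⟨rfl, rfl⟩
  exact absurd (card_support_le_degree d) (not_le.2 h)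

lemma coeff_neg_one_pow_mul_pnr (N n j : ℕ) (e : Fin N →₀ ℕ) :
    coeff e ((-1) ^ n * pnr N n j) =
      if e.degree = n then signedSupportIndicator K j e else 0 := by
  rw [show ((-1 : MvPolynomial (Fin N) K)) ^ n = MvPolynomial.C ((-1) ^ n) by simp,
    MvPolynomial.coeff_C_mul, coeff_pnr, signedSupportIndicator]
  by_cases hn : e.degree = n <;> by_cases hj : #e.support = j <;> simp [hn, hj]

lemma sum_antidiagonal_esymm_mul_pnr (N M j : ℕ) :
    ∑ p ∈ antidiagonal M, esymm (Fin N) K p.1 * ((-1) ^ p.2 * pnr N p.2 j) =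
      MvPolynomial.C ((-1) ^ j * (M.choose j : K)) * esymm (Fin N) K M := by
  ext d
  rw [coeff_sum_antidiagonal_esymm_mul (fun n => (-1) ^ n * pnr N n j)
    (signedSupportIndicator K j) (coeff_neg_one_pow_mul_pnr N · j), MvPolynomial.coeff_C_mul]
  split_ifs with hd
  · rw [sum_powerset_signedSupportIndicator_tsub, hd]
  · rw [coeff_esymm_eq_zero_of_degree_ne hd, mul_zero]

lemma sum_antidiagonal_esymm_mul_pnr_add (N m r j : ℕ) (hrj : r ≤ j) :
    ∑ p ∈ antidiagonal m, esymm (Fin N) K p.1 * ((-1) ^ p.2 * pnr N (p.2 + r) j) =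
      MvPolynomial.C ((-1) ^ (j + r) * ((m + r).choose j : K)) * esymm (Fin N) K (m + r) := by
  have h := sum_antidiagonal_esymm_mul_pnr N (m + r) j
  rw [Nat.sum_antidiagonal_eq_sum_range_succ_mk] at h ⊢
  rw [← sum_subset (range_subset_range.2 (by omega : m + 1 ≤ m + r + 1)) fun k _ hk => by
    rw [pnr_eq_zero_of_lt (by grind), mul_zero, mul_zero]] at h
  have hsq : ((-1 : MvPolynomial (Fin N) K) ^ r) ^ 2 = 1 := by
    rw [← pow_mul, pow_mul', neg_one_sq, one_pow]
  calc _ = (-1) ^ r * ∑ k ∈ range (m + 1), esymm (Fin N) K k *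
        ((-1) ^ (m + r - k) * pnr N (m + r - k) j) := by
        rw [mul_sum]
        refine sum_congr rfl fun k hk => ?_
        rw [show m + r - k = m - k + r by grind]
        linear_combination (-(esymm (Fin N) K k * (-1) ^ (m - k) * pnr N (m - k + r) j)) * hsq
    _ = _ := by
        rw [h, pow_add]
        simp only [map_mul, map_pow, map_neg, map_one]
        ring

noncomputable def qAnalogExpansion (N r n : ℕ) : MvPolynomial (Fin N) K :=
  ∑ j ∈ Icc r n, pnr N n j * MvPolynomial.C (signedQBinomSum r j)

lemma sum_antidiagonal_esymm_mul_qAnalogExpansion (N r m : ℕ) :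
    ∑ p ∈ antidiagonal m, esymm (Fin N) K p.1 * ((-1) ^ p.2 * qAnalogExpansion N r (p.2 + r)) =
      MvPolynomial.C (qBinom qq (m + r) r) * esymm (Fin N) K (m + r) := by
  have hext : ∀ b ≤ m, qAnalogExpansion N r (b + r) =
      ∑ j ∈ Icc r (m + r), pnr N (b + r) j * MvPolynomial.C (signedQBinomSum r j) :=
    fun b hb => sum_subset (Icc_subset_Icc_right (by omega)) fun j hj hj' => by
      rw [pnr_eq_zero_of_lt (by grind), zero_mul]
  calc _ = ∑ p ∈ antidiagonal m, ∑ j ∈ Icc r (m + r), MvPolynomial.C (signedQBinomSum r j) *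
        (esymm (Fin N) K p.1 * ((-1) ^ p.2 * pnr N (p.2 + r) j)) :=
        sum_congr rfl fun p hp => by
          rw [hext p.2 (HasAntidiagonal.antidiagonal.snd_le hp), mul_sum, mul_sum]
          exact sum_congr rfl fun j _ => by ring
    _ = MvPolynomial.C (∑ j ∈ Icc r (m + r),
          ((m + r).choose j : K) * ((-1) ^ (j + r) * signedQBinomSum r j)) *
          esymm (Fin N) K (m + r) := by
        rw [sum_comm, map_sum, sum_mul]
        refine sum_congr rfl fun j hj => ?_
        rw [← mul_sum, sum_antidiagonal_esymm_mul_pnr_add N m r j (mem_Icc.1 hj).1, ← mul_assoc,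
          ← map_mul]
        congr 2
        ring
    _ = _ := by rw [sum_choose_mul_signedQBinomSum]

theorem qAnalog_eq_sum_signed_qbinom_general (N n r : ℕ) (hrn : r ≤ n)
    (Dq : PowerSeries (MvPolynomial (Fin N) K) → PowerSeries (MvPolynomial (Fin N) K))
    (hDq : IsqDeriv N Dq)
    (P : ℕ → ℕ → MvPolynomial (Fin N) K) (hP : IsqAnalog N Dq P) :
    P n r =
      ∑ j ∈ Finset.Icc r n,
        pnr N n j *
          MvPolynomial.C (∑ l ∈ Finset.Icc r j,
            (-1 : K) ^ (l - r) * (j.choose l : K) * qBinom qq l r) := by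
  have hQ : PowerSeries.C (MvPolynomial.C (qFact qq r)) * Eser N *
      PowerSeries.mk (fun m => (-1) ^ m * qAnalogExpansion N r (m + r)) = Dq^[r] (Eser N) := by
    ext m
    rw [mul_assoc, PowerSeries.coeff_C_mul, PowerSeries.coeff_mul, hDq.coeff_iterate]
    simp only [Eser, coeff_mk]
    rw [sum_antidiagonal_esymm_mul_qAnalogExpansion, ← mul_assoc, ← map_mul, qFact_mul_qBinom]
  have hE : PowerSeries.C (MvPolynomial.C (qFact qq r)) * Eser N ≠ 0 := by
    refine mul_ne_zero ((map_ne_zero_iff _ PowerSeries.C_injective).2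
      (MvPolynomial.C_ne_zero.2 (qFact_ne_zero r))) fun h => ?_
    simpa [Eser] using congrArg PowerSeries.constantCoeff h
  have hcoeff := congrArg (PowerSeries.coeff (n - r)) (mul_left_cancel₀ hE ((hP r).trans hQ.symm))
  rw [coeff_mk, coeff_mk, Nat.sub_add_cancel hrn] at hcoeff
  exact mul_left_cancel₀ (pow_ne_zero _ (neg_ne_zero.2 one_ne_zero)) hcoeff

/-- for `n ≥ r ≥ 1`,
`[p_n^{(r)}]_q = ∑_{j=r}^n p_n^{(j)} ( ∑_{l=r}^j (−1)^{l−r} C(j,l) [l choose r]_q )`. -/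
theorem qAnalog_eq_sum_signed_qbinom (N n r : ℕ) (hN : n ≤ N) (hr : 1 ≤ r) (hrn : r ≤ n)
    (Dq : PowerSeries (MvPolynomial (Fin N) K) → PowerSeries (MvPolynomial (Fin N) K))
    (hDq : IsqDeriv N Dq)
    (P : ℕ → ℕ → MvPolynomial (Fin N) K) (hP : IsqAnalog N Dq P) :
    P n r =
      ∑ j ∈ Finset.Icc r n,
        pnr N n j *
          MvPolynomial.C (∑ l ∈ Finset.Icc r j,
            (-1 : K) ^ (l - r) * (j.choose l : K) * qBinom qq l r) :=
  qAnalog_eq_sum_signed_qbinom_general N n r hrn Dq hDq P hP
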